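/- In every double Boolean algebra D, for all x, y, a ∈ D: if x ⊑ y then x⊓a ⊑ y⊓a and x⊔a ⊑ y⊔a. -/
import Mathlib


structure DBA (D : Type) where
  cup : D → D → D
  cap : D → D → D
  neg : D → D
  opp : D → D
  top : D
  bot : D
  ax1a : ∀ x y, cap (cap x x) y = cap x y
  ax1b : ∀ x y, cup (cup x x) y = cup x y
  ax2a : ∀ x y, cap x y = cap y x
  ax2b : ∀ x y, cup x y = cup y x
  ax3a : ∀ x y z, cap x (cap y z) = cap (cap x y) z
  ax3b : ∀ x y z, cup x (cup y z) = cup (cup x y) z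
  ax4a : ∀ x, neg (cap x x) = neg x
  ax4b : ∀ x, opp (cup x x) = opp x
  ax5a : ∀ x y, cap x (cup x y) = cap x x
  ax5b : ∀ x y, cup x (cap x y) = cup x x
  ax6a : ∀ x y z, cap x (neg (cap (neg y) (neg z))) =
    neg (cap (neg (cap x y)) (neg (cap x z)))
  ax6b : ∀ x y z, cup x (opp (cup (opp y) (opp z))) =
    opp (cup (opp (cup x y)) (opp (cup x z)))
  ax7a : ∀ x y, cap x (neg (cap (neg x) (neg y))) = cap x x
  ax7b : ∀ x y, cup x (opp (cup (opp x) (opp y))) = cup x x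
  ax8a : ∀ x y, neg (neg (cap x y)) = cap x y
  ax8b : ∀ x y, opp (opp (cup x y)) = cup x y
  ax9a : ∀ x, cap x (neg x) = bot
  ax9b : ∀ x, cup x (opp x) = top
  ax10a : neg bot = cap top top
  ax10b : opp top = cup bot bot
  ax11a : neg top = bot
  ax11b : opp bot = top
  ax12 : ∀ x, cup (cap x x) (cap x x) = cap (cup x x) (cup x x)

/-- The quasi-order on a double Boolean algebra. -/
def DBA.le {D : Type} (A : DBA D) (x y : D) : Prop :=
  A.cap x y = A.cap x x ∧ A.cup x y = A.cup y y

/-- A double Boolean algebra is pure if every element is ⊓- or ⊔-idempotent. -/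
def DBA.Pure {D : Type} (A : DBA D) : Prop :=
  ∀ x, A.cap x x = x ∨ A.cup x x = x

lemma DBA.capcap {D : Type} (A : DBA D) (x a y b : D) :
    A.cap (A.cap x a) (A.cap y b) = A.cap (A.cap x y) (A.cap a b) := by
  rw [← A.ax3a, ← A.ax3a, A.ax3a a y b, A.ax2a a y, ← A.ax3a y a b]

lemma DBA.cupcup {D : Type} (A : DBA D) (x a y b : D) :
    A.cup (A.cup x a) (A.cup y b) = A.cup (A.cup x y) (A.cup a b) := by
  rw [← A.ax3b, ← A.ax3b, A.ax3b a y b, A.ax2b a y, ← A.ax3b y a b]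

lemma DBA.cap_idem_right {D : Type} (A : DBA D) (x a : D) :
    A.cap x (A.cap a a) = A.cap x a := by
  rw [A.ax2a, A.ax1a, A.ax2a]

lemma DBA.cup_idem_right {D : Type} (A : DBA D) (x a : D) :
    A.cup x (A.cup a a) = A.cup x a := by
  rw [A.ax2b, A.ax1b, A.ax2b]

theorem stmt6 {D : Type} (A : DBA D) (x y a : D) (h : A.le x y) :
    A.le (A.cap x a) (A.cap y a) ∧ A.le (A.cup x a) (A.cup y a) := by
  obtain ⟨h1, h2⟩ := h
  have key1 : A.cap (A.cap y a) (A.cap x a) = A.cap x a := by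
    rw [A.capcap, A.ax2a y x, h1, A.cap_idem_right, A.ax1a]
  have key2 : A.cup (A.cup x a) (A.cup y a) = A.cup y a := by
    rw [A.cupcup, h2, A.cup_idem_right, A.ax1b]
  refine ⟨⟨?_, ?_⟩, ⟨?_, ?_⟩⟩
  · rw [A.capcap, h1, ← A.capcap]
  · rw [A.ax2b, ← A.ax5b (A.cap y a) (A.cap x a), key1]
  · rw [← A.ax5a (A.cup x a) (A.cup y a), key2]
  · rw [A.cupcup, h2, ← A.cupcup]
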